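/- arXiv:2309.06944 — 5 statements merged into one kernel-verified Lean document; each statement's English description precedes it below -/
import Mathlib

section
/- Every Klee-graph is Hamiltonian. -/
open SimpleGraph
open scoped Classical

/-- `H` is obtained from `G` by expanding the vertex `v` into a triangle. -/
def IsTriangleExpansion {V W : Type} (G : SimpleGraph V) (H : SimpleGraph W) : Prop :=
  ∃ (v : V) (t : Fin 3 → W) (g : {u : V // u ≠ v} → W) (σ : Fin 3 → {u : V // u ≠ v}),
    Function.Injective t ∧ Function.Injective g ∧
    (Set.range t ∩ Set.range g = ∅) ∧ (Set.range t ∪ Set.range g = Set.univ) ∧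
    Function.Injective σ ∧ (∀ i, G.Adj v (σ i).1) ∧
    (∀ u : {u : V // u ≠ v}, G.Adj v u.1 → u ∈ Set.range σ) ∧
    (∀ i j, H.Adj (t i) (t j) ↔ i ≠ j) ∧
    (∀ a b : {u : V // u ≠ v}, H.Adj (g a) (g b) ↔ G.Adj a.1 b.1) ∧
    (∀ i a, H.Adj (t i) (g a) ↔ a = σ i)

/-- Klee-graphs: `K₄` is Klee, and any triangle expansion of a Klee-graph is Klee. -/
inductive IsKlee : ∀ {V : Type}, SimpleGraph V → Prop
  | base {V : Type} (G : SimpleGraph V) (e : V ≃ Fin 4)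
      (h : ∀ a b : V, G.Adj a b ↔ a ≠ b) : IsKlee G
  | expand {V W : Type} (G : SimpleGraph V) (H : SimpleGraph W)
      (hG : IsKlee G) (h : IsTriangleExpansion G H) : IsKlee H

/-- A perfect matching given as a set of edges. -/
def IsPerfectMatchingSet {V : Type} (G : SimpleGraph V) (M : Set (Sym2 V)) : Prop :=
  M ⊆ G.edgeSet ∧ ∀ v : V, ∃! e : Sym2 V, e ∈ M ∧ v ∈ e

/-- A cubic (3-regular) graph. -/
def IsCubic {V : Type} (G : SimpleGraph V) : Prop :=
  ∀ v : V, (G.neighborSet v).ncard = 3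

/-- A circuit: a connected 2-regular subgraph. -/
def IsCircuitSub {V : Type} {G : SimpleGraph V} (C : G.Subgraph) : Prop :=
  C.coe.Connected ∧ ∀ v ∈ C.verts, (C.neighborSet v).ncard = 2

/-- A collection of pairwise vertex-disjoint circuits. -/
def IsDisjointCircuitCollection {V : Type} (G : SimpleGraph V) (𝒞 : Set G.Subgraph) : Prop :=
  (∀ C ∈ 𝒞, IsCircuitSub C) ∧ 𝒞.Pairwise fun C D => Disjoint C.verts D.verts

/-- The edge cut determined by a vertex set `A`. -/
def cutEdges {V : Type} (G : SimpleGraph V) (A : Set V) : Set (Sym2 V) :=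
  {e | e ∈ G.edgeSet ∧ ∃ a b : V, e = s(a, b) ∧ a ∈ A ∧ b ∉ A}

/-- `G` is cyclically `k`-edge-connected: every cyclic edge-cut has at least `k` edges. -/
def IsCyclicallyEdgeConnected {V : Type} (G : SimpleGraph V) (k : ℕ) : Prop :=
  ∀ A : Set V, ¬(G.induce A).IsAcyclic → ¬(G.induce Aᶜ).IsAcyclic →
    k ≤ (cutEdges G A).ncard

/-- A triangle of `G`, as a vertex set. -/
def IsTriangleSet {V : Type} (G : SimpleGraph V) (T : Set V) : Prop :=
  ∃ a b c : V, T = {a, b, c} ∧ G.Adj a b ∧ G.Adj a c ∧ G.Adj b c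

/-- An edge lying on a cycle of length `n`. -/
def LiesOnCycleOfLength {V : Type} [DecidableEq V] (G : SimpleGraph V) (e : Sym2 V) (n : ℕ) : Prop :=
  ∃ (a : V) (w : G.Walk a a), w.IsCycle ∧ w.length = n ∧ e ∈ w.edges

/-- The complement of `M` in `G` is a Hamiltonian cycle. -/
def ComplementIsHamCycle {V : Type} [DecidableEq V] (G : SimpleGraph V) (M : Set (Sym2 V)) : Prop :=
  ∃ (a : V) (w : G.Walk a a), w.IsHamiltonianCycle ∧ {e | e ∈ w.edges} = G.edgeSet \ M

/-- A `1⁺`-factor: a spanning set of edges with all degrees at least one. -/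
def Is1PlusFactor {V : Type} (G : SimpleGraph V) (F : Set (Sym2 V)) : Prop :=
  F ⊆ G.edgeSet ∧ ∀ v : V, ∃ e ∈ F, v ∈ e

/-- The Klee ladder `KL_{2k+2}`: the grid `P₂ □ P_k` together with two adjacent
vertices `inr 0` and `inr 1` joined to the first and last rung, respectively. -/
def kleeLadder (k : ℕ) : SimpleGraph ((Fin 2 × Fin k) ⊕ Fin 2) :=
  SimpleGraph.fromRel fun a b =>
    (∃ i j j', a = .inl (i, j) ∧ b = .inl (i, j') ∧ (j' : ℕ) = (j : ℕ) + 1) ∨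
    (∃ i i' j, a = .inl (i, j) ∧ b = .inl (i', j) ∧ i ≠ i') ∨
    (∃ i j, a = .inr 0 ∧ b = .inl (i, j) ∧ (j : ℕ) = 0) ∨
    (∃ i j, a = .inr 1 ∧ b = .inl (i, j) ∧ (j : ℕ) = k - 1) ∨
    (a = .inr 0 ∧ b = .inr 1)

/-- The ladder (`k`-sided prism) `L_{2k} = C_k □ K₂`. -/
def ladder (k : ℕ) : SimpleGraph (Fin 2 × ZMod k) :=
  SimpleGraph.fromRel fun a b => (a.1 = b.1 ∧ b.2 = a.2 + 1) ∨ (a.2 = b.2 ∧ a.1 ≠ b.1)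

/-- The Möbius ladder `ML_{2k}`: a `2k`-cycle plus all antipodal chords. -/
def mobiusLadder (k : ℕ) : SimpleGraph (ZMod (2 * k)) :=
  SimpleGraph.fromRel fun a b => b = a + 1 ∨ b = a + (k : ZMod (2 * k))

/-- The quasi-ladder `QL_{2m+4}`: the grid `P₂ □ P_m` together with a 4-cycle
on four new vertices `inr (i, 0)` (joined to the first rung) and
`inr (i, 1)` (joined to the last rung). -/
def quasiLadder (m : ℕ) : SimpleGraph ((Fin 2 × Fin m) ⊕ (Fin 2 × Fin 2)) :=
  SimpleGraph.fromRel fun a b =>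
    (∃ i j j', a = .inl (i, j) ∧ b = .inl (i, j') ∧ (j' : ℕ) = (j : ℕ) + 1) ∨
    (∃ i i' j, a = .inl (i, j) ∧ b = .inl (i', j) ∧ i ≠ i') ∨
    (∃ i i', a = .inr (i, 0) ∧ b = .inr (i', 1)) ∨
    (∃ i j, a = .inr (i, 0) ∧ b = .inl (i, j) ∧ (j : ℕ) = 0) ∨
    (∃ i j, a = .inr (i, 1) ∧ b = .inl (i, j) ∧ (j : ℕ) = m - 1)

/-- The graph obtained from `G` by deleting the endvertices `u, v` of an edge and
adding the edges `αβ` and `γδ`. -/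
def reducedGraph {V : Type} (G : SimpleGraph V) (u v α β γ δ : V) :
    SimpleGraph {x : V // x ≠ u ∧ x ≠ v} :=
  SimpleGraph.fromRel fun a b =>
    G.Adj a.1 b.1 ∨ (a.1 = α ∧ b.1 = β) ∨ (a.1 = γ ∧ b.1 = δ)

/-- The cyclic edge-connectivity of `G`. -/
noncomputable def cyclicEdgeConnectivity {V : Type} [Fintype V] (G : SimpleGraph V) : ℕ :=
  if ∃ A : Set V, ¬(G.induce A).IsAcyclic ∧ ¬(G.induce Aᶜ).IsAcyclic then
    sInf {n | ∃ A : Set V, ¬(G.induce A).IsAcyclic ∧ ¬(G.induce Aᶜ).IsAcyclic ∧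
      (cutEdges G A).ncard = n}
  else G.edgeSet.ncard - Fintype.card V + 1


/-!
A Hamiltonian cycle of `G` passes through `v` along two distinct neighbours `σ i` and `σ j`, so
deleting `v` leaves a Hamiltonian path of `G - v` from `σ i` to `σ j`. After expanding `v` into the
triangle `t₀ t₁ t₂`, this path is closed up through the triangle as
`t i → σ i ⋯ σ j → t j → t k → t i`, where `k` is the third index. Starting from the obvious
Hamiltonian cycle of `K₄`, induction along the construction of a Klee-graph gives the theorem.
-/

lemma Fin.exists_third (i j : Fin 3) (hij : i ≠ j) :
    ∃ k, k ≠ i ∧ k ≠ j ∧ ∀ m, m = i ∨ m = j ∨ m = k := by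
  revert i j
  decide

namespace SimpleGraph

open Walk

section

variable {V W : Type} [DecidableEq V] [DecidableEq W]

lemma Walk.IsHamiltonian.isHamiltonianCycle_cons {G : SimpleGraph V} {u v : V}
    {p : G.Walk u v} (hp : p.IsHamiltonian) (h : G.Adj v u) (hlen : 2 ≤ p.length) :
    (cons h p).IsHamiltonianCycle := by
  rw [isHamiltonianCycle_iff_isCycle_and_support_count_tail_eq_one, cons_isCycle_iff]
  refine ⟨⟨hp.isPath, fun he => ?_⟩, fun w => by simpa using hp w⟩
  have := hp.isPath.length_eq_one_of_mem_edges (Sym2.eq_swap ▸ he)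
  omega

lemma Iso.exists_isHamiltonianCycle {G : SimpleGraph V} {H : SimpleGraph W} (e : G ≃g H)
    (hG : ∃ a, ∃ c : G.Walk a a, c.IsHamiltonianCycle) :
    ∃ a, ∃ c : H.Walk a a, c.IsHamiltonianCycle := by
  obtain ⟨a, c, hc⟩ := hG
  exact ⟨e a, c.map e.toHom, hc.map e.bijective⟩

lemma exists_isHamiltonianCycle_top_fin_four :
    ∃ a, ∃ c : (⊤ : SimpleGraph (Fin 4)).Walk a a, c.IsHamiltonianCycle := by
  let p : (⊤ : SimpleGraph (Fin 4)).Walk 0 3 :=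
    .cons (by decide : (0 : Fin 4) ≠ 1) (.cons (by decide : (1 : Fin 4) ≠ 2)
      (.cons (by decide : (2 : Fin 4) ≠ 3) .nil))
  have hp : p.IsHamiltonian := by
    unfold Walk.IsHamiltonian
    decide
  exact ⟨3, _, hp.isHamiltonianCycle_cons (by decide : (3 : Fin 4) ≠ 0) (by decide)⟩

lemma Walk.IsHamiltonianCycle.exists_isHamiltonian_induce {G : SimpleGraph V} {a : V}
    {c : G.Walk a a} (hc : c.IsHamiltonianCycle) (v : V) :
    ∃ (x y : {u // u ≠ v}) (q : (G.induce {u | u ≠ v}).Walk x y),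
      G.Adj v x ∧ G.Adj v y ∧ x ≠ y ∧ q.IsHamiltonian := by
  have hd := hc.rotate (hc.mem_support v)
  generalize c.rotate v _ = d at hd
  obtain ⟨x, y, hx, hy, q, rfl⟩ : ∃ (x y : V) (hx : G.Adj v x) (hy : G.Adj y v) (q : G.Walk x y),
      d = cons hx (q.concat hy) := by
    cases d with
    | nil => exact absurd hd.isCycle.not_nil (by simp)
    | cons hx r =>
      cases r with
      | nil => exact absurd hx G.irrefl
      | cons h r =>
        obtain ⟨y, q, hy, hq⟩ := exists_cons_eq_concat h r
        exact ⟨_, y, hx, hy, q, by rw [hq]⟩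
  have hcount : ∀ w, (q.support ++ [v]).count w = 1 := by
    simpa [support_concat] using
      (isHamiltonianCycle_iff_isCycle_and_support_count_tail_eq_one.1 hd).2
  have hvq : v ∉ q.support := by
    have := hcount v
    simp only [List.count_append, List.count_singleton_self] at this
    exact List.count_eq_zero.1 (by omega)
  have hqv : ∀ w ∈ q.support, w ≠ v := fun w hw hwv => hvq (hwv ▸ hw)
  have hq : q.IsPath := IsPath.mk' <| List.nodup_iff_count_le_one.2 fun w => by
    have := hcount w
    rw [List.count_append] at this
    omega
  have hxy : x ≠ y := by
    have := hd.isCycle.snd_ne_penultimate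
    rwa [penultimate_cons_of_not_nil _ _ (not_nil_iff_lt_length.2 (by simp)),
      penultimate_concat, snd_cons] at this
  let q' := q.induce {u | u ≠ v} hqv
  have hq' : q'.IsPath := IsPath.of_map (f := (Embedding.induce _).toHom) (by
    rw [map_induce]
    exact hq)
  refine ⟨⟨x, hx.ne'⟩, ⟨y, hy.ne⟩, q', hx, hy.symm,
    fun h => hxy (congrArg Subtype.val h), hq'.isHamiltonian_of_mem fun w => ?_⟩
  rw [support_induce, List.mem_attachWith]
  have : w.1 ∈ q.support ++ [v] := List.count_pos_iff.1 (by rw [hcount w]; exact Nat.one_pos)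
  exact (List.mem_append.1 this).resolve_right (List.mem_singleton.not.2 w.2)

end

end SimpleGraph

open SimpleGraph Walk

lemma IsTriangleExpansion.exists_isHamiltonianCycle {V W : Type} [DecidableEq V] [DecidableEq W]
    {G : SimpleGraph V} {H : SimpleGraph W} (h : IsTriangleExpansion G H)
    (hG : ∃ a, ∃ c : G.Walk a a, c.IsHamiltonianCycle) :
    ∃ a, ∃ c : H.Walk a a, c.IsHamiltonianCycle := by
  obtain ⟨v, t, g, σ, ht, hg, hdisj, hcover, -, -, hσ, hTT, hGG, hTG⟩ := h
  obtain ⟨a, c, hc⟩ := hG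
  obtain ⟨x, y, q, hx, hy, hxy, hq⟩ := hc.exists_isHamiltonian_induce v
  obtain ⟨i, rfl⟩ := hσ x hx
  obtain ⟨j, rfl⟩ := hσ y hy
  have hij : i ≠ j := ne_of_apply_ne σ hxy
  obtain ⟨k, hki, hkj, hijk⟩ := Fin.exists_third i j hij
  have htg : ∀ m b, t m ≠ g b := fun m b he =>
    Set.eq_empty_iff_forall_notMem.1 hdisj (t m) ⟨⟨m, rfl⟩, b, he.symm⟩
  let φ : G.induce {u | u ≠ v} ↪g H := ⟨⟨g, hg⟩, hGG _ _⟩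
  let P : H.Walk (t i) (t k) := cons ((hTG i _).2 rfl)
    ((q.map φ.toHom).append (cons ((hTG j _).2 rfl).symm (cons ((hTT j k).2 hkj.symm) nil)))
  have hP : P.IsPath := by
    apply IsPath.mk'
    have hφ : ∀ b, φ b = g b := fun _ => rfl
    simp [P, support_append, List.nodup_append, List.nodup_map_iff φ.injective,
      hq.isPath.support_nodup, hφ, ht.ne_iff, hij, hki.symm, hkj.symm, (htg _ _).symm]
    rintro _ _ _ _ rfl
    exact ⟨(htg j _).symm, (htg k _).symm⟩
  refine ⟨t k, _, (hP.isHamiltonian_of_mem fun w => ?_).isHamiltonianCycle_cons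
    ((hTT k i).2 hki) (by simp [P])⟩
  have hw : w ∈ Set.range t ∪ Set.range g := hcover ▸ Set.mem_univ w
  rcases hw with ⟨m, rfl⟩ | ⟨b, rfl⟩
  · rcases hijk m with rfl | rfl | rfl <;> simp [P, support_append]
  · simp only [P, support_cons, support_append, List.mem_cons, List.mem_append]
    exact Or.inr (Or.inl (by rw [Walk.support_map]; exact List.mem_map_of_mem (hq.mem_support b)))

theorem IsKlee.exists_isHamiltonianCycle {V : Type} {G : SimpleGraph V} (hG : IsKlee G) :
    ∃ a, ∃ c : G.Walk a a, c.IsHamiltonianCycle := by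
  induction hG with
  | base G e hK =>
    let iso : G ≃g (⊤ : SimpleGraph (Fin 4)) := ⟨e, by simp [hK]⟩
    exact iso.symm.exists_isHamiltonianCycle exists_isHamiltonianCycle_top_fin_four
  | expand G H _ h ih => exact h.exists_isHamiltonianCycle ih

theorem klee_isHamiltonian {V : Type} [Fintype V] (G : SimpleGraph V) (hG : IsKlee G) :
    G.IsHamiltonian := fun _ => hG.exists_isHamiltonianCycle
end

section
/- The proper 3-edge-colouring of a Klee-graph is unique up to permutation of the colours; equivalently, the edge set of a Klee-graph admits a unique partition into three pairwise disjoint perfect matchings. -/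
open SimpleGraph
open scoped Classical

/-!
Contracting the triangle of a triangle expansion `H` of `G` back to a vertex turns every
3-edge-colouring of `H` into one of `G`. The point is that each colour class contains exactly one
of the three spokes leaving the triangle: at least one because the triangle has three vertices,
and not two, since two matched spokes force the third and leave no spoke for the other colours.
Contraction loses nothing, because a perfect matching contains the triangle edge between two
triangle vertices exactly when neither of their spokes is matched. Hence uniqueness of the
colouring passes from `G` to `H`, starting from `K₄`, which has only three perfect matchings.
-/

namespace IsPerfectMatchingSet

variable {V : Type} {G : SimpleGraph V} {M : Set (Sym2 V)}

theorem adj_of_mem (hM : IsPerfectMatchingSet G M) {x y : V} (h : s(x, y) ∈ M) : G.Adj x y :=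
  G.mem_edgeSet.1 (hM.1 h)

theorem exists_mem (hM : IsPerfectMatchingSet G M) (x : V) : ∃ y, s(x, y) ∈ M := by
  obtain ⟨e, ⟨he, hxe⟩, -⟩ := hM.2 x
  obtain ⟨y, rfl⟩ := Sym2.mem_iff_exists.1 hxe
  exact ⟨y, he⟩

theorem eq_of_mem (hM : IsPerfectMatchingSet G M) {x y z : V} (hy : s(x, y) ∈ M)
    (hz : s(x, z) ∈ M) : y = z := by
  obtain ⟨e, -, he⟩ := hM.2 x
  exact Sym2.congr_right.1 ((he _ ⟨hy, Sym2.mem_mk_left x y⟩).trans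
    (he _ ⟨hz, Sym2.mem_mk_left x z⟩).symm)

theorem of_forall (hsub : M ⊆ G.edgeSet) (hex : ∀ x, ∃ y, s(x, y) ∈ M)
    (huniq : ∀ x y z, s(x, y) ∈ M → s(x, z) ∈ M → y = z) : IsPerfectMatchingSet G M := by
  refine ⟨hsub, fun x => ?_⟩
  obtain ⟨y, hy⟩ := hex x
  refine ⟨s(x, y), ⟨hy, Sym2.mem_mk_left x y⟩, fun e ⟨he, hxe⟩ => ?_⟩
  obtain ⟨z, rfl⟩ := Sym2.mem_iff_exists.1 hxe
  rw [huniq x z y he hy]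

theorem ne_of_disjoint [Nonempty V] (hM : IsPerfectMatchingSet G M) {N : Set (Sym2 V)}
    (h : Disjoint M N) : M ≠ N := by
  rintro rfl
  obtain ⟨y, hy⟩ := hM.exists_mem (Classical.arbitrary V)
  exact Set.disjoint_left.1 h hy hy

theorem eq_pair_of_forall_eq_or {x y z w : V} (hall : ∀ u, u = x ∨ u = y ∨ u = z ∨ u = w)
    (hxz : x ≠ z) (hyz : y ≠ z) (hM : IsPerfectMatchingSet G M) (hxy : s(x, y) ∈ M) :
    M = {s(x, y), s(z, w)} := by
  have hyx : s(y, x) ∈ M := Sym2.eq_swap ▸ hxy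
  obtain ⟨p, hp⟩ := hM.exists_mem z
  have hzw : s(z, w) ∈ M := by
    rcases hall p with rfl | rfl | rfl | rfl
    · exact absurd (hM.eq_of_mem hxy (Sym2.eq_swap ▸ hp)) hyz
    · exact absurd (hM.eq_of_mem hyx (Sym2.eq_swap ▸ hp)) hxz
    · exact absurd rfl (hM.adj_of_mem hp).ne
    · exact hp
  have hwz : s(w, z) ∈ M := Sym2.eq_swap ▸ hzw
  ext e
  refine ⟨fun he => ?_, by rintro (rfl | rfl) <;> assumption⟩
  induction e using Sym2.ind with | _ a b => ?_
  rcases hall a with rfl | rfl | rfl | rfl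
  · simp [hM.eq_of_mem he hxy]
  · simp [hM.eq_of_mem he hyx, Sym2.eq_swap]
  · simp [hM.eq_of_mem he hzw]
  · simp [hM.eq_of_mem he hwz, Sym2.eq_swap]

end IsPerfectMatchingSet

theorem setOf_isPerfectMatchingSet_subset_of_equiv_fin_four {V : Type} {G : SimpleGraph V}
    (e : V ≃ Fin 4) :
    {M | IsPerfectMatchingSet G M} ⊆
      {{s(e.symm 0, e.symm 1), s(e.symm 2, e.symm 3)},
        {s(e.symm 0, e.symm 2), s(e.symm 1, e.symm 3)},
        {s(e.symm 0, e.symm 3), s(e.symm 1, e.symm 2)}} := by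
  intro M hM
  have hall : ∀ u, u = e.symm 0 ∨ u = e.symm 1 ∨ u = e.symm 2 ∨ u = e.symm 3 := by
    intro u
    obtain ⟨i, rfl⟩ := e.symm.surjective u
    fin_cases i <;> simp
  have hne : ∀ {i j : Fin 4}, i ≠ j → e.symm i ≠ e.symm j := e.symm.injective.ne
  obtain ⟨c, hc⟩ := hM.exists_mem (e.symm 0)
  rcases hall c with rfl | rfl | rfl | rfl
  · exact absurd rfl (hM.adj_of_mem hc).ne
  · exact .inl (hM.eq_pair_of_forall_eq_or hall (hne (by decide)) (hne (by decide)) hc)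
  · refine .inr (.inl (hM.eq_pair_of_forall_eq_or (fun u => ?_) (hne (by decide))
      (hne (by decide)) hc))
    rcases hall u with h | h | h | h <;> simp [h]
  · refine .inr (.inr (hM.eq_pair_of_forall_eq_or (fun u => ?_) (hne (by decide))
      (hne (by decide)) hc))
    rcases hall u with h | h | h | h <;> simp [h]

/-- A proper 3-edge-colouring, given by its three colour classes. -/
structure IsPerfectMatchingPartition {V : Type} (G : SimpleGraph V)
    (M₁ M₂ M₃ : Set (Sym2 V)) : Prop where
  isPerfectMatchingSet₁ : IsPerfectMatchingSet G M₁
  isPerfectMatchingSet₂ : IsPerfectMatchingSet G M₂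
  isPerfectMatchingSet₃ : IsPerfectMatchingSet G M₃
  disjoint₁₂ : Disjoint M₁ M₂
  disjoint₁₃ : Disjoint M₁ M₃
  disjoint₂₃ : Disjoint M₂ M₃
  union_eq : M₁ ∪ M₂ ∪ M₃ = G.edgeSet

def HasUniquePerfectMatchingPartition {V : Type} (G : SimpleGraph V) : Prop :=
  ∀ M₁ M₂ M₃ N₁ N₂ N₃ : Set (Sym2 V), IsPerfectMatchingPartition G M₁ M₂ M₃ →
    IsPerfectMatchingPartition G N₁ N₂ N₃ →
    ({M₁, M₂, M₃} : Set (Set (Sym2 V))) = {N₁, N₂, N₃}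

theorem IsPerfectMatchingPartition.insert_subset_setOf {V : Type} {G : SimpleGraph V}
    {M₁ M₂ M₃ : Set (Sym2 V)} (hP : IsPerfectMatchingPartition G M₁ M₂ M₃) :
    ({M₁, M₂, M₃} : Set (Set (Sym2 V))) ⊆ {M | IsPerfectMatchingSet G M} := by
  rintro M (rfl | rfl | rfl)
  exacts [hP.isPerfectMatchingSet₁, hP.isPerfectMatchingSet₂, hP.isPerfectMatchingSet₃]

theorem IsPerfectMatchingPartition.eq_of_setOf_subset {V : Type} [Nonempty V]
    {G : SimpleGraph V} {M₁ M₂ M₃ A B C : Set (Sym2 V)}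
    (hP : IsPerfectMatchingPartition G M₁ M₂ M₃)
    (h : {M | IsPerfectMatchingSet G M} ⊆ {A, B, C}) :
    ({M₁, M₂, M₃} : Set (Set (Sym2 V))) = {A, B, C} := by
  refine Set.eq_of_subset_of_ncard_le (hP.insert_subset_setOf.trans h) ?_ (Set.toFinite _)
  rw [Set.ncard_eq_three.2 ⟨M₁, M₂, M₃,
    hP.isPerfectMatchingSet₁.ne_of_disjoint hP.disjoint₁₂,
    hP.isPerfectMatchingSet₁.ne_of_disjoint hP.disjoint₁₃,
    hP.isPerfectMatchingSet₂.ne_of_disjoint hP.disjoint₂₃, rfl⟩]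
  grw [Set.ncard_insert_le, Set.ncard_insert_le, Set.ncard_singleton]

theorem hasUniquePerfectMatchingPartition_of_equiv_fin_four {V : Type} {G : SimpleGraph V}
    (e : V ≃ Fin 4) : HasUniquePerfectMatchingPartition G := by
  have : Nonempty V := ⟨e.symm 0⟩
  intro M₁ M₂ M₃ N₁ N₂ N₃ hM hN
  rw [hM.eq_of_setOf_subset (setOf_isPerfectMatchingSet_subset_of_equiv_fin_four e),
    hN.eq_of_setOf_subset (setOf_isPerfectMatchingSet_subset_of_equiv_fin_four e)]

structure TriangleExpansion {V W : Type} (G : SimpleGraph V) (H : SimpleGraph W) where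
  v : V
  t : Fin 3 → W
  g : {u : V // u ≠ v} → W
  σ : Fin 3 → {u : V // u ≠ v}
  t_injective : Function.Injective t
  g_injective : Function.Injective g
  range_t_inter_range_g : Set.range t ∩ Set.range g = ∅
  range_t_union_range_g : Set.range t ∪ Set.range g = Set.univ
  σ_injective : Function.Injective σ
  adj_σ : ∀ i, G.Adj v (σ i).1
  mem_range_σ : ∀ u : {u : V // u ≠ v}, G.Adj v u.1 → u ∈ Set.range σ
  adj_t_t : ∀ i j, H.Adj (t i) (t j) ↔ i ≠ j
  adj_g_g : ∀ a b : {u : V // u ≠ v}, H.Adj (g a) (g b) ↔ G.Adj a.1 b.1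
  adj_t_g : ∀ i a, H.Adj (t i) (g a) ↔ a = σ i

theorem IsTriangleExpansion.nonempty {V W : Type} {G : SimpleGraph V} {H : SimpleGraph W}
    (h : IsTriangleExpansion G H) : Nonempty (TriangleExpansion G H) :=
  let ⟨v, t, g, σ, h₁, h₂, h₃, h₄, h₅, h₆, h₇, h₈, h₉, h₁₀⟩ := h
  ⟨⟨v, t, g, σ, h₁, h₂, h₃, h₄, h₅, h₆, h₇, h₈, h₉, h₁₀⟩⟩

namespace TriangleExpansion

variable {V W : Type} {G : SimpleGraph V} {H : SimpleGraph W} (X : TriangleExpansion G H)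

theorem t_ne_g (i : Fin 3) (a : {u : V // u ≠ X.v}) : X.t i ≠ X.g a :=
  fun h => Set.eq_empty_iff_forall_notMem.1 X.range_t_inter_range_g (X.t i)
    ⟨⟨i, rfl⟩, ⟨a, h.symm⟩⟩

theorem exists_t_eq_or_exists_g_eq (w : W) : (∃ i, X.t i = w) ∨ ∃ a, X.g a = w := by
  have hw : w ∈ Set.range X.t ∪ Set.range X.g := X.range_t_union_range_g ▸ Set.mem_univ w
  simpa only [Set.mem_union, Set.mem_range] using hw

/-- The vertex map contracting the triangle to `v`. -/
noncomputable def proj (w : W) : V :=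
  if h : ∃ a, X.g a = w then h.choose.1 else X.v

@[simp] theorem proj_t (i : Fin 3) : X.proj (X.t i) = X.v :=
  dif_neg fun ⟨a, ha⟩ => X.t_ne_g i a ha.symm

@[simp] theorem proj_g (a : {u : V // u ≠ X.v}) : X.proj (X.g a) = a := by
  have h : ∃ b, X.g b = X.g a := ⟨a, rfl⟩
  rw [proj, dif_pos h, X.g_injective h.choose_spec]

theorem exists_t_eq_of_proj_eq {w : W} (hw : X.proj w = X.v) : ∃ i, X.t i = w := by
  rcases X.exists_t_eq_or_exists_g_eq w with h | ⟨a, rfl⟩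
  · exact h
  · exact absurd (X.proj_g a ▸ hw) a.2

theorem eq_of_proj_eq {w w' : W} (h : X.proj w = X.proj w') (hw : X.proj w ≠ X.v) : w = w' := by
  rcases X.exists_t_eq_or_exists_g_eq w with ⟨i, rfl⟩ | ⟨a, rfl⟩
  · exact absurd (X.proj_t i) hw
  rcases X.exists_t_eq_or_exists_g_eq w' with ⟨j, rfl⟩ | ⟨b, rfl⟩
  · exact absurd (h.trans (X.proj_t j)) hw
  · rw [X.proj_g, X.proj_g] at h
    rw [Subtype.ext h]

theorem eq_g_σ_of_adj {i : Fin 3} {w : W} (h : H.Adj (X.t i) w) (hw : X.proj w ≠ X.v) :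
    w = X.g (X.σ i) := by
  rcases X.exists_t_eq_or_exists_g_eq w with ⟨j, rfl⟩ | ⟨a, rfl⟩
  · exact absurd (X.proj_t j) hw
  · rw [(X.adj_t_g i a).1 h]

theorem adj_proj_of_adj {x y : W} (h : H.Adj x y) :
    (X.proj x = X.v ∧ X.proj y = X.v) ∨ G.Adj (X.proj x) (X.proj y) := by
  rcases X.exists_t_eq_or_exists_g_eq x with ⟨i, rfl⟩ | ⟨a, rfl⟩ <;>
    rcases X.exists_t_eq_or_exists_g_eq y with ⟨j, rfl⟩ | ⟨b, rfl⟩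
  · simp
  · simpa [(X.adj_t_g i b).1 h] using .inr (X.adj_σ i)
  · simpa [(X.adj_t_g j a).1 h.symm] using .inr (X.adj_σ j).symm
  · simpa using .inr ((X.adj_g_g a b).1 h)

theorem exists_adj_of_adj {x y : V} (h : G.Adj x y) :
    ∃ x' y', H.Adj x' y' ∧ X.proj x' = x ∧ X.proj y' = y := by
  have key : ∀ {y}, G.Adj X.v y →
      ∃ x' y', H.Adj x' y' ∧ X.proj x' = X.v ∧ X.proj y' = y := by
    intro y hy
    obtain ⟨i, hi⟩ := X.mem_range_σ ⟨y, hy.ne.symm⟩ hy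
    exact ⟨X.t i, X.g (X.σ i), (X.adj_t_g i _).2 rfl, X.proj_t i, by simp [hi]⟩
  by_cases hx : x = X.v
  · subst hx
    exact key h
  by_cases hy : y = X.v
  · subst hy
    obtain ⟨x', y', h', hx', hy'⟩ := key h.symm
    exact ⟨y', x', h'.symm, hy', hx'⟩
  exact ⟨X.g ⟨x, hx⟩, X.g ⟨y, hy⟩, (X.adj_g_g _ _).2 h, X.proj_g _, X.proj_g _⟩

theorem eq_of_proj_eq_of_proj_eq {x y x' y' : W} (h : H.Adj x y) (h' : H.Adj x' y')
    (hx : X.proj x = X.proj x') (hy : X.proj y = X.proj y')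
    (hG : G.Adj (X.proj x) (X.proj y)) :
    s(x, y) = s(x', y') := by
  wlog hxv : X.proj x ≠ X.v generalizing x y x' y'
  · rw [Sym2.eq_swap, this h.symm h'.symm hy hx hG.symm (not_not.1 hxv ▸ hG.ne.symm),
      Sym2.eq_swap]
  obtain rfl := X.eq_of_proj_eq hx hxv
  by_cases hyv : X.proj y = X.v
  · obtain ⟨i, rfl⟩ := X.exists_t_eq_of_proj_eq hyv
    obtain ⟨j, rfl⟩ := X.exists_t_eq_of_proj_eq (hy ▸ hyv)
    have hij := X.eq_g_σ_of_adj h.symm hxv ▸ X.eq_g_σ_of_adj h'.symm hxv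
    rw [X.σ_injective (X.g_injective hij)]
  · rw [X.eq_of_proj_eq hy hyv]

variable {M M' : Set (Sym2 W)}

theorem spoke_mem_or_exists_mem (hM : IsPerfectMatchingSet H M) (i : Fin 3) :
    s(X.t i, X.g (X.σ i)) ∈ M ∨ ∃ j, j ≠ i ∧ s(X.t i, X.t j) ∈ M := by
  obtain ⟨w, hw⟩ := hM.exists_mem (X.t i)
  rcases X.exists_t_eq_or_exists_g_eq w with ⟨j, rfl⟩ | ⟨a, rfl⟩
  · exact .inr ⟨j, ((X.adj_t_t i j).1 (hM.adj_of_mem hw)).symm, hw⟩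
  · exact .inl ((X.adj_t_g i a).1 (hM.adj_of_mem hw) ▸ hw)

theorem t_t_mem_iff (hM : IsPerfectMatchingSet H M) {i j : Fin 3} (hij : i ≠ j) :
    s(X.t i, X.t j) ∈ M ↔
      s(X.t i, X.g (X.σ i)) ∉ M ∧ s(X.t j, X.g (X.σ j)) ∉ M := by
  refine ⟨fun h => ⟨fun hi => X.t_ne_g j _ (hM.eq_of_mem h hi),
    fun hj => X.t_ne_g i _ (hM.eq_of_mem (Sym2.eq_swap ▸ h) hj)⟩, fun ⟨hi, hj⟩ => ?_⟩
  obtain ⟨k, hki, hk⟩ := (X.spoke_mem_or_exists_mem hM i).resolve_left hi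
  obtain ⟨l, hlj, hl⟩ := (X.spoke_mem_or_exists_mem hM j).resolve_left hj
  by_cases hkj : k = j
  · exact hkj ▸ hk
  by_cases hli : l = i
  · exact Sym2.eq_swap ▸ hli ▸ hl
  obtain rfl : k = l := by omega
  exact absurd (X.t_injective (hM.eq_of_mem (Sym2.eq_swap ▸ hk) (Sym2.eq_swap ▸ hl))) hij

theorem exists_spoke_mem (hM : IsPerfectMatchingSet H M) :
    ∃ i, s(X.t i, X.g (X.σ i)) ∈ M := by
  by_contra! h
  have h₀₁ := (X.t_t_mem_iff hM (i := 0) (j := 1) (by decide)).2 ⟨h 0, h 1⟩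
  have h₀₂ := (X.t_t_mem_iff hM (i := 0) (j := 2) (by decide)).2 ⟨h 0, h 2⟩
  exact absurd (X.t_injective (hM.eq_of_mem h₀₁ h₀₂)) (by decide)

theorem spoke_mem_of_spoke_mem_of_spoke_mem (hM : IsPerfectMatchingSet H M) {i j : Fin 3}
    (hij : i ≠ j) (hi : s(X.t i, X.g (X.σ i)) ∈ M) (hj : s(X.t j, X.g (X.σ j)) ∈ M)
    (k : Fin 3) :
    s(X.t k, X.g (X.σ k)) ∈ M := by
  by_contra hk
  have hki : k ≠ i := by rintro rfl; exact hk hi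
  have hkj : k ≠ j := by rintro rfl; exact hk hj
  obtain ⟨l, hlk, hl⟩ := (X.spoke_mem_or_exists_mem hM k).resolve_left hk
  have hl' := ((X.t_t_mem_iff hM hlk.symm).1 hl).2
  obtain rfl | rfl : l = i ∨ l = j := by omega
  exacts [hl' hi, hl' hj]

theorem eq_of_spoke_mem_of_disjoint (hM : IsPerfectMatchingSet H M)
    (hM' : IsPerfectMatchingSet H M') (hd : Disjoint M M') {i j : Fin 3}
    (hi : s(X.t i, X.g (X.σ i)) ∈ M) (hj : s(X.t j, X.g (X.σ j)) ∈ M) : i = j := by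
  by_contra hij
  obtain ⟨k, hk⟩ := X.exists_spoke_mem hM'
  exact Set.disjoint_left.1 hd (X.spoke_mem_of_spoke_mem_of_spoke_mem hM hij hi hj k) hk

/-- Edges inside the triangle become loops under `proj` and are dropped. -/
def contract (M : Set (Sym2 W)) : Set (Sym2 V) :=
  G.edgeSet ∩ Sym2.map X.proj '' M

theorem mem_contract_iff {x y : V} :
    s(x, y) ∈ X.contract M ↔
      G.Adj x y ∧ ∃ x' y', s(x', y') ∈ M ∧ X.proj x' = x ∧ X.proj y' = y := by
  simp only [contract, Set.mem_inter_iff, SimpleGraph.mem_edgeSet, Set.mem_image]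
  refine and_congr_right fun _ => ⟨?_, ?_⟩
  · rintro ⟨e, he, hxy⟩
    induction e using Sym2.ind with | _ x' y' => ?_
    rw [Sym2.map_mk, Sym2.eq_iff] at hxy
    rcases hxy with ⟨rfl, rfl⟩ | ⟨rfl, rfl⟩
    exacts [⟨x', y', he, rfl, rfl⟩, ⟨y', x', Sym2.eq_swap ▸ he, rfl, rfl⟩]
  · rintro ⟨x', y', he, rfl, rfl⟩
    exact ⟨_, he, rfl⟩

theorem contract_union : X.contract (M ∪ M') = X.contract M ∪ X.contract M' := by
  simp only [contract, Set.image_union, Set.inter_union_distrib_left]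

theorem contract_edgeSet : X.contract H.edgeSet = G.edgeSet := by
  refine Set.inter_eq_left.2 fun e he => ?_
  induction e using Sym2.ind with | _ x y => ?_
  obtain ⟨x', y', h, rfl, rfl⟩ := X.exists_adj_of_adj he
  exact ⟨s(x', y'), h, rfl⟩

theorem eq_of_map_proj_eq {e e' : Sym2 W} (he : e ∈ H.edgeSet) (he' : e' ∈ H.edgeSet)
    (h : Sym2.map X.proj e = Sym2.map X.proj e') (hG : Sym2.map X.proj e ∈ G.edgeSet) :
    e = e' := by
  induction e using Sym2.ind with | _ x y => ?_
  induction e' using Sym2.ind with | _ x' y' => ?_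
  rw [Sym2.map_mk, Sym2.map_mk, Sym2.eq_iff] at h
  rcases h with ⟨hx, hy⟩ | ⟨hx, hy⟩
  · exact X.eq_of_proj_eq_of_proj_eq he he' hx hy hG
  · rw [Sym2.eq_swap (a := x')]
    exact X.eq_of_proj_eq_of_proj_eq he (SimpleGraph.adj_symm _ he') hx hy hG

theorem mem_of_map_proj_mem_contract (hM : M ⊆ H.edgeSet) {e : Sym2 W} (he : e ∈ H.edgeSet)
    (h : Sym2.map X.proj e ∈ X.contract M) : e ∈ M := by
  obtain ⟨hG, e', he', heq⟩ := h
  rwa [X.eq_of_map_proj_eq he (hM he') heq.symm hG]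

theorem disjoint_contract (hM : M ⊆ H.edgeSet) (hM' : M' ⊆ H.edgeSet) (hd : Disjoint M M') :
    Disjoint (X.contract M) (X.contract M') := by
  rw [Set.disjoint_left]
  rintro _ ⟨-, e, he, rfl⟩ he'
  exact Set.disjoint_left.1 hd he (X.mem_of_map_proj_mem_contract hM' (hM he) he')

theorem isPerfectMatchingSet_contract (hM : IsPerfectMatchingSet H M)
    (hM' : IsPerfectMatchingSet H M') (hd : Disjoint M M') :
    IsPerfectMatchingSet G (X.contract M) := by
  refine .of_forall Set.inter_subset_left (fun u => ?_) (fun u y z hy hz => ?_)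
  · by_cases hu : u = X.v
    · subst hu
      obtain ⟨i, hi⟩ := X.exists_spoke_mem hM
      exact ⟨_, X.mem_contract_iff.2 ⟨X.adj_σ i, _, _, hi, X.proj_t i, X.proj_g _⟩⟩
    · obtain ⟨w, hw⟩ := hM.exists_mem (X.g ⟨u, hu⟩)
      refine ⟨X.proj w, X.mem_contract_iff.2 ⟨?_, _, _, hw, X.proj_g _, rfl⟩⟩
      simpa [hu] using X.adj_proj_of_adj (hM.adj_of_mem hw)
  · obtain ⟨hadj₁, x₁, y₁, h₁, hx₁, rfl⟩ := X.mem_contract_iff.1 hy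
    obtain ⟨hadj₂, x₂, y₂, h₂, hx₂, rfl⟩ := X.mem_contract_iff.1 hz
    by_cases hu : u = X.v
    · subst hu
      obtain ⟨i, rfl⟩ := X.exists_t_eq_of_proj_eq hx₁
      obtain ⟨j, rfl⟩ := X.exists_t_eq_of_proj_eq hx₂
      obtain rfl := X.eq_g_σ_of_adj (hM.adj_of_mem h₁) hadj₁.ne.symm
      obtain rfl := X.eq_g_σ_of_adj (hM.adj_of_mem h₂) hadj₂.ne.symm
      rw [X.eq_of_spoke_mem_of_disjoint hM hM' hd h₁ h₂]
    · rw [X.eq_of_proj_eq (hx₁.trans hx₂.symm) (hx₁ ▸ hu)] at h₁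
      rw [hM.eq_of_mem h₁ h₂]

theorem isPerfectMatchingPartition_contract {M₁ M₂ M₃ : Set (Sym2 W)}
    (hP : IsPerfectMatchingPartition H M₁ M₂ M₃) :
    IsPerfectMatchingPartition G (X.contract M₁) (X.contract M₂) (X.contract M₃) where
  isPerfectMatchingSet₁ := X.isPerfectMatchingSet_contract hP.isPerfectMatchingSet₁
    hP.isPerfectMatchingSet₂ hP.disjoint₁₂
  isPerfectMatchingSet₂ := X.isPerfectMatchingSet_contract hP.isPerfectMatchingSet₂
    hP.isPerfectMatchingSet₁ hP.disjoint₁₂.symm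
  isPerfectMatchingSet₃ := X.isPerfectMatchingSet_contract hP.isPerfectMatchingSet₃
    hP.isPerfectMatchingSet₁ hP.disjoint₁₃.symm
  disjoint₁₂ := X.disjoint_contract hP.isPerfectMatchingSet₁.1 hP.isPerfectMatchingSet₂.1
    hP.disjoint₁₂
  disjoint₁₃ := X.disjoint_contract hP.isPerfectMatchingSet₁.1 hP.isPerfectMatchingSet₃.1
    hP.disjoint₁₃
  disjoint₂₃ := X.disjoint_contract hP.isPerfectMatchingSet₂.1 hP.isPerfectMatchingSet₃.1
    hP.disjoint₂₃
  union_eq := by rw [← X.contract_union, ← X.contract_union, hP.union_eq, X.contract_edgeSet]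

theorem subset_of_contract_eq {N : Set (Sym2 W)} (hM : IsPerfectMatchingSet H M)
    (hN : IsPerfectMatchingSet H N) (h : X.contract M = X.contract N) : M ⊆ N := by
  intro e he
  have heH := hM.1 he
  by_cases hG : Sym2.map X.proj e ∈ G.edgeSet
  · exact X.mem_of_map_proj_mem_contract hN.1 heH (h ▸ ⟨hG, e, he, rfl⟩)
  induction e using Sym2.ind with | _ x y => ?_
  obtain ⟨hx, hy⟩ := (X.adj_proj_of_adj heH).resolve_right hG
  obtain ⟨i, rfl⟩ := X.exists_t_eq_of_proj_eq hx
  obtain ⟨j, rfl⟩ := X.exists_t_eq_of_proj_eq hy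
  have hij := (X.adj_t_t i j).1 heH
  have spoke_mem : ∀ k, s(X.t k, X.g (X.σ k)) ∈ N → s(X.t k, X.g (X.σ k)) ∈ M :=
    fun k hk => X.mem_of_map_proj_mem_contract hM.1 (hN.1 hk)
      (h ▸ ⟨by simpa using X.adj_σ k, _, hk, rfl⟩)
  obtain ⟨hi, hj⟩ := (X.t_t_mem_iff hM hij).1 he
  exact (X.t_t_mem_iff hN hij).2 ⟨mt (spoke_mem i) hi, mt (spoke_mem j) hj⟩

theorem injOn_contract : Set.InjOn X.contract {M | IsPerfectMatchingSet H M} :=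
  fun _ hM _ hN h =>
    (X.subset_of_contract_eq hM hN h).antisymm (X.subset_of_contract_eq hN hM h.symm)

end TriangleExpansion

theorem TriangleExpansion.hasUniquePerfectMatchingPartition {V W : Type} {G : SimpleGraph V}
    {H : SimpleGraph W} (X : TriangleExpansion G H) (hG : HasUniquePerfectMatchingPartition G) :
    HasUniquePerfectMatchingPartition H := by
  intro M₁ M₂ M₃ N₁ N₂ N₃ hM hN
  have h := hG _ _ _ _ _ _ (X.isPerfectMatchingPartition_contract hM)
    (X.isPerfectMatchingPartition_contract hN)
  rw [← (X.injOn_contract.image_eq_image_iff hM.insert_subset_setOf hN.insert_subset_setOf)]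
  simpa only [Set.image_insert_eq, Set.image_singleton] using h

theorem IsKlee.hasUniquePerfectMatchingPartition {V : Type} {G : SimpleGraph V} (hG : IsKlee G) :
    HasUniquePerfectMatchingPartition G := by
  induction hG with
  | base G e _ => exact hasUniquePerfectMatchingPartition_of_equiv_fin_four e
  | expand G H _ hexp ih => exact hexp.nonempty.some.hasUniquePerfectMatchingPartition ih

theorem klee_unique_three_edge_colouring {V : Type} (G : SimpleGraph V) (hG : IsKlee G)
    (M1 M2 M3 N1 N2 N3 : Set (Sym2 V))
    (hM1 : IsPerfectMatchingSet G M1) (hM2 : IsPerfectMatchingSet G M2)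
    (hM3 : IsPerfectMatchingSet G M3)
    (hM12 : Disjoint M1 M2) (hM13 : Disjoint M1 M3) (hM23 : Disjoint M2 M3)
    (hMU : M1 ∪ M2 ∪ M3 = G.edgeSet)
    (hN1 : IsPerfectMatchingSet G N1) (hN2 : IsPerfectMatchingSet G N2)
    (hN3 : IsPerfectMatchingSet G N3)
    (hN12 : Disjoint N1 N2) (hN13 : Disjoint N1 N3) (hN23 : Disjoint N2 N3)
    (hNU : N1 ∪ N2 ∪ N3 = G.edgeSet) :
    ({M1, M2, M3} : Set (Set (Sym2 V))) = {N1, N2, N3} :=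
  hG.hasUniquePerfectMatchingPartition _ _ _ _ _ _
    ⟨hM1, hM2, hM3, hM12, hM13, hM23, hMU⟩ ⟨hN1, hN2, hN3, hN12, hN13, hN23, hNU⟩
end

section
/- Every Klee-graph on at least 6 vertices has at least two triangles, and all of its triangles are pairwise vertex-disjoint. -/
open SimpleGraph
open scoped Classical

/-!
By induction along the definition, a Klee-graph is either `K₄` or has at least two triangles, all
pairwise disjoint. In both cases every vertex-deleted subgraph `G - v` has a triangle and pairwise
disjoint triangles. Now expand `v` into a triangle `t`: each `t i` has a single neighbour outside
`t`, so no triangle meets both `t` and the old vertices, and the triangles of the expansion are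
`t` together with the copies of the triangles of `G - v`. Hence the expansion again has at least
two triangles, pairwise disjoint. A Klee-graph on at least 6 vertices is not `K₄`.
-/

open Set Function

namespace SimpleGraph

def triangleSets {V : Type} (G : SimpleGraph V) : Set (Set V) := {T | IsTriangleSet G T}

-- The vertex type is the domain of `g` in `IsTriangleExpansion`.
def deleteVertex {V : Type} (G : SimpleGraph V) (v : V) : SimpleGraph {u // u ≠ v} :=
  G.comap (↑)

def deleteVertexEmbedding {V : Type} (G : SimpleGraph V) (v : V) : G.deleteVertex v ↪g G :=
  Embedding.comap (Function.Embedding.subtype _) G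

end SimpleGraph

section Triangles

variable {V W : Type} {G : SimpleGraph V} {H : SimpleGraph W} {T : Set V}

theorem IsTriangleSet.ncard_eq_three (hT : IsTriangleSet G T) : T.ncard = 3 := by
  obtain ⟨a, b, c, rfl, hab, hac, hbc⟩ := hT
  exact ncard_eq_three.2 ⟨a, b, c, hab.ne, hac.ne, hbc.ne, rfl⟩

theorem isTriangleSet_top_iff : IsTriangleSet (⊤ : SimpleGraph V) T ↔ T.ncard = 3 := by
  refine ⟨IsTriangleSet.ncard_eq_three, fun hT => ?_⟩
  obtain ⟨a, b, c, hab, hac, hbc, rfl⟩ := ncard_eq_three.1 hT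
  exact ⟨a, b, c, rfl, hab, hac, hbc⟩

theorem triangleSets_top_of_card_eq_three (hV : Nat.card V = 3) :
    (⊤ : SimpleGraph V).triangleSets = {univ} := by
  have : Finite V := Nat.finite_of_card_ne_zero (by omega)
  ext T
  change IsTriangleSet ⊤ T ↔ T = univ
  rw [isTriangleSet_top_iff]
  refine ⟨fun hT => eq_of_subset_of_ncard_le (subset_univ T) ?_, fun hT => ?_⟩
  · rw [ncard_univ, hV, hT]
  · rw [hT, ncard_univ, hV]

theorem IsTriangleSet.image (f : G →g H) (hT : IsTriangleSet G T) : IsTriangleSet H (f '' T) := by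
  obtain ⟨a, b, c, rfl, hab, hac, hbc⟩ := hT
  exact ⟨f a, f b, f c, by simp only [image_insert_eq, image_singleton],
    f.map_adj hab, f.map_adj hac, f.map_adj hbc⟩

theorem IsTriangleSet.exists_image_eq (f : G ↪g H) {T : Set W} (hT : IsTriangleSet H T)
    (hTf : T ⊆ range f) : ∃ S, IsTriangleSet G S ∧ f '' S = T := by
  obtain ⟨x, y, z, rfl, hxy, hxz, hyz⟩ := hT
  obtain ⟨a, rfl⟩ := hTf (mem_insert x _)
  obtain ⟨b, rfl⟩ := hTf (mem_insert_of_mem _ (mem_insert y _))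
  obtain ⟨c, rfl⟩ := hTf (mem_insert_of_mem _ (mem_insert_of_mem _ rfl))
  exact ⟨{a, b, c}, ⟨a, b, c, rfl, f.map_adj_iff.1 hxy, f.map_adj_iff.1 hxz,
    f.map_adj_iff.1 hyz⟩, by simp only [image_insert_eq, image_singleton]⟩

theorem SimpleGraph.Embedding.pairwise_disjoint_triangleSets (f : G ↪g H)
    (hH : H.triangleSets.Pairwise Disjoint) : G.triangleSets.Pairwise Disjoint :=
  fun _ hS₁ _ hS₂ hne => (disjoint_image_iff f.injective).1 <|
    hH (IsTriangleSet.image f.toHom hS₁) (IsTriangleSet.image f.toHom hS₂)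
      ((image_injective.2 f.injective).ne hne)

theorem SimpleGraph.Embedding.pairwise_disjoint_image_triangleSets (f : G ↪g H)
    (hG : G.triangleSets.Pairwise Disjoint) :
    ((f '' ·) '' G.triangleSets).Pairwise Disjoint :=
  (image_injective.2 f.injective).injOn.pairwise_image.2
    fun _ hS₁ _ hS₂ hne => (disjoint_image_iff f.injective).2 (hG hS₁ hS₂ hne)

end Triangles

section TriangleExpansion

variable {α W : Type} {H : SimpleGraph W} {t : Fin 3 → W} {g : α → W} {σ : Fin 3 → α}

theorem mem_range_of_adj_of_adj (hσ : Injective σ) (hcover : range t ∪ range g = univ)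
    (htg : ∀ i a, H.Adj (t i) (g a) ↔ a = σ i) {i : Fin 3} {w w' : W}
    (hw : H.Adj (t i) w) (hw' : H.Adj (t i) w') (hww' : H.Adj w w') : w ∈ range t := by
  have hcover' (x : W) : x ∈ range t ∪ range g := hcover ▸ mem_univ x
  rcases hcover' w with hwt | ⟨a, rfl⟩
  · exact hwt
  have ha := (htg i a).1 hw
  rcases hcover' w' with ⟨k, rfl⟩ | ⟨b, rfl⟩
  · obtain rfl : i = k := hσ (ha.symm.trans ((htg k a).1 hww'.symm))
    exact absurd hw' H.irrefl
  · obtain rfl : a = b := ha.trans ((htg i b).1 hw').symm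
    exact absurd hww' H.irrefl

theorem IsTriangleSet.eq_range_or_subset_range (ht : Injective t) (hσ : Injective σ)
    (hcover : range t ∪ range g = univ) (htg : ∀ i a, H.Adj (t i) (g a) ↔ a = σ i)
    {T : Set W} (hT : IsTriangleSet H T) : T = range t ∨ T ⊆ range g := by
  have hT3 := hT.ncard_eq_three
  obtain ⟨x, y, z, rfl, hxy, hxz, hyz⟩ := hT
  by_cases hx : x ∈ range t
  · obtain ⟨i, rfl⟩ := hx
    have hy := mem_range_of_adj_of_adj hσ hcover htg hxy hxz hyz
    have hz := mem_range_of_adj_of_adj hσ hcover htg hxz hxy hyz.symm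
    refine Or.inl (eq_of_subset_of_ncard_le ?_ ?_)
    · exact insert_subset (mem_range_self i) (insert_subset hy (singleton_subset_iff.2 hz))
    · rw [ncard_range_of_injective ht, Nat.card_fin, hT3]
  have hy : y ∉ range t := by
    rintro ⟨j, rfl⟩
    exact hx (mem_range_of_adj_of_adj hσ hcover htg hxy.symm hyz hxz)
  have hz : z ∉ range t := by
    rintro ⟨k, rfl⟩
    exact hx (mem_range_of_adj_of_adj hσ hcover htg hxz.symm hyz.symm hxy)
  have hcover' (w : W) (hw : w ∉ range t) : w ∈ range g :=
    (hcover ▸ mem_univ w : w ∈ range t ∪ range g).resolve_left hw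
  exact Or.inr (insert_subset (hcover' x hx)
    (insert_subset (hcover' y hy) (singleton_subset_iff.2 (hcover' z hz))))

theorem IsTriangleExpansion.nontrivial_pairwise_disjoint {V : Type} {G : SimpleGraph V}
    (h : IsTriangleExpansion G H)
    (hG : ∀ v : V, (G.deleteVertex v).triangleSets.Nonempty ∧
      (G.deleteVertex v).triangleSets.Pairwise Disjoint) :
    H.triangleSets.Nontrivial ∧ H.triangleSets.Pairwise Disjoint := by
  obtain ⟨v, t, g, σ, ht, hg, hdisj, hcover, hσ, -, -, htt, hgg, htg⟩ := h
  obtain ⟨⟨S, hS⟩, hpairwise⟩ := hG v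
  let f : G.deleteVertex v ↪g H := ⟨⟨g, hg⟩, hgg _ _⟩
  have hrange : range t ∈ H.triangleSets := by
    refine ⟨t 0, t 1, t 2, ?_, (htt 0 1).2 (by decide), (htt 0 2).2 (by decide),
      (htt 1 2).2 (by decide)⟩
    ext w
    simp [Fin.exists_fin_succ, eq_comm]
  have hsplit :
      H.triangleSets = insert (range t) ((f '' ·) '' (G.deleteVertex v).triangleSets) := by
    ext T
    refine ⟨fun hT => ?_, ?_⟩
    · rcases hT.eq_range_or_subset_range ht hσ hcover htg with rfl | hsub
      · exact mem_insert _ _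
      · obtain ⟨S, hS, rfl⟩ := IsTriangleSet.exists_image_eq f hT hsub
        exact mem_insert_of_mem _ ⟨S, hS, rfl⟩
    · rintro (rfl | ⟨S, hS, rfl⟩)
      exacts [hrange, IsTriangleSet.image f.toHom hS]
  have hdisj' (S) : Disjoint (range t) (f '' S) :=
    (disjoint_iff_inter_eq_empty.2 hdisj).mono_right (image_subset_range _ _)
  rw [hsplit]
  refine ⟨⟨range t, mem_insert _ _, f '' S, mem_insert_of_mem _ ⟨S, hS, rfl⟩,
    (hdisj' S).ne (range_nonempty t).ne_empty⟩, ?_⟩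
  rw [pairwise_insert_of_symm]
  exact ⟨f.pairwise_disjoint_image_triangleSets hpairwise, fun _ ⟨S, _, hS⟩ _ => hS ▸ hdisj' S⟩

end TriangleExpansion

section VertexDeletion

variable {V : Type} {G : SimpleGraph V}

theorem triangleSets_deleteVertex_top (hV : Nat.card V = 4) (v : V) :
    ((⊤ : SimpleGraph V).deleteVertex v).triangleSets = {univ} := by
  have : Finite V := Nat.finite_of_card_ne_zero (by omega)
  have hcard : Nat.card {u // u ≠ v} = 3 := by
    change ({v}ᶜ : Set V).ncard = 3
    rw [ncard_compl, ncard_singleton, hV]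
  rw [deleteVertex, comap_top Subtype.val_injective, triangleSets_top_of_card_eq_three hcard]

theorem triangleSets_deleteVertex_nonempty (hne : G.triangleSets.Nontrivial)
    (hdisj : G.triangleSets.Pairwise Disjoint) (v : V) :
    (G.deleteVertex v).triangleSets.Nonempty := by
  obtain ⟨T₁, h₁, T₂, h₂, h₁₂⟩ := hne
  obtain ⟨T, hT, hvT⟩ : ∃ T ∈ G.triangleSets, v ∉ T := by
    by_contra! h
    exact disjoint_left.1 (hdisj h₁ h₂ h₁₂) (h T₁ h₁) (h T₂ h₂)
  obtain ⟨S, hS, -⟩ := IsTriangleSet.exists_image_eq (G.deleteVertexEmbedding v) hT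
    fun x hx => ⟨⟨x, ne_of_mem_of_not_mem hx hvT⟩, rfl⟩
  exact ⟨S, hS⟩

end VertexDeletion

theorem IsKlee.eq_top_or_triangleSets {V : Type} {G : SimpleGraph V} (hG : IsKlee G) :
    (G = ⊤ ∧ Nat.card V = 4) ∨ (G.triangleSets.Nontrivial ∧ G.triangleSets.Pairwise Disjoint) := by
  induction hG with
  | base G e h =>
    exact Or.inl ⟨by ext a b; exact h a b, (Nat.card_congr e).trans (Nat.card_fin 4)⟩
  | expand G H _ h ih =>
    refine Or.inr (h.nontrivial_pairwise_disjoint fun v => ?_)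
    rcases ih with ⟨rfl, hV⟩ | ⟨hne, hdisj⟩
    · rw [triangleSets_deleteVertex_top hV v]
      exact ⟨singleton_nonempty _, pairwise_singleton _ _⟩
    · exact ⟨triangleSets_deleteVertex_nonempty hne hdisj v,
        (G.deleteVertexEmbedding v).pairwise_disjoint_triangleSets hdisj⟩

theorem klee_triangles_disjoint {V : Type} [Fintype V] (G : SimpleGraph V) (hG : IsKlee G)
    (h6 : 6 ≤ Fintype.card V) :
    (∃ T1 T2 : Set V, IsTriangleSet G T1 ∧ IsTriangleSet G T2 ∧ T1 ≠ T2) ∧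
    (∀ T1 T2 : Set V, IsTriangleSet G T1 → IsTriangleSet G T2 → T1 ≠ T2 →
      Disjoint T1 T2) := by
  rcases hG.eq_top_or_triangleSets with ⟨-, hV⟩ | ⟨⟨T₁, h₁, T₂, h₂, h₁₂⟩, hdisj⟩
  · rw [Nat.card_eq_fintype_card] at hV
    omega
  · exact ⟨⟨T₁, T₂, h₁, h₂, h₁₂⟩, fun _ _ h₁ h₂ h₁₂ => hdisj h₁ h₂ h₁₂⟩
end

section
/- Let G be a Hamiltonian cubic graph and let C be a collection of pairwise vertex-disjoint circuits (cycles) of G. Then there exists a perfect matching M of G which contains at least one edge of every circuit in C. -/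
/-!
Let `H` be a Hamiltonian cycle of `G`. Since `G` is cubic and `H` is a spanning 2-regular
subgraph, the edges of `G` off `H` form a perfect matching, and it meets every circuit that
is not contained in `H`. A circuit all of whose edges lie on `H` is `H` itself; being spanning,
it is then the only circuit of the collection, and it is met by a perfect matching made of
alternate edges of `H`, which exists because `H` has even length `|V|` (`G` is cubic).
-/

open SimpleGraph
open scoped Classical

section

variable {V : Type} {G : SimpleGraph V}

lemma isPerfectMatchingSet_edgeSet {K : SimpleGraph V} (hKG : K ≤ G)
    (hK : ∀ v, (K.neighborSet v).ncard = 1) : IsPerfectMatchingSet G K.edgeSet := by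
  refine ⟨edgeSet_mono hKG, fun v => ?_⟩
  obtain ⟨e, he⟩ := Set.ncard_eq_one.mp <|
    (Set.ncard_congr' (K.incidenceSetEquivNeighborSet v)).trans (hK v)
  have hmem : ∀ f, f ∈ K.edgeSet ∧ v ∈ f ↔ f = e := fun f => by
    rw [← Set.mem_singleton_iff, ← he]; rfl
  exact ⟨e, (hmem e).2 rfl, fun f hf => (hmem f).1 hf⟩

lemma SimpleGraph.Subgraph.IsPerfectMatching.isPerfectMatchingSet {M : G.Subgraph}
    (hM : M.IsPerfectMatching) : IsPerfectMatchingSet G M.edgeSet := by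
  rw [← M.edgeSet_spanningCoe]
  refine isPerfectMatchingSet_edgeSet (Subgraph.spanningCoe_le M) fun v => ?_
  obtain ⟨w, hw, huniq⟩ := isPerfectMatching_iff.mp hM v
  exact Set.ncard_eq_one.mpr ⟨w, Set.eq_singleton_iff_unique_mem.mpr ⟨hw, huniq⟩⟩

lemma IsCubic.isPerfectMatchingSet_edgeSet_diff (hG : IsCubic G) {H : G.Subgraph}
    (hH : ∀ v, (H.neighborSet v).ncard = 2) :
    IsPerfectMatchingSet G (G.edgeSet \ H.edgeSet) := by
  rw [← H.edgeSet_spanningCoe, ← edgeSet_sdiff]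
  refine isPerfectMatchingSet_edgeSet sdiff_le fun v => ?_
  change (G.neighborSet v \ H.neighborSet v).ncard = 1
  rw [Set.ncard_sdiff (H.neighborSet_subset v)
    (Set.finite_of_ncard_ne_zero (by rw [hH v]; decide)), hG v, hH v]

lemma IsCubic.nontrivial [Nonempty V] (hG : IsCubic G) : Nontrivial V := by
  obtain ⟨v⟩ := ‹Nonempty V›
  obtain ⟨w, hvw⟩ := Set.nonempty_of_ncard_ne_zero (s := G.neighborSet v)
    (by rw [hG v]; decide)
  exact ⟨v, w, hvw.ne⟩

lemma IsCubic.even_card [Fintype V] (hG : IsCubic G) : Even (Fintype.card V) := by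
  have hdeg : ∀ v, G.degree v = 3 := fun v => by
    rw [← card_neighborSet_eq_degree, ← Set.toFinset_card, ← Set.ncard_eq_toFinset_card',
      hG v]
  have hsum := G.sum_degrees_eq_twice_card_edges
  simp only [hdeg, Finset.sum_const, Finset.card_univ, smul_eq_mul] at hsum
  rw [Nat.even_iff]
  omega

lemma SimpleGraph.Walk.IsCycle.isCircuitSub_toSubgraph {u : V} {p : G.Walk u u}
    (hp : p.IsCycle) : IsCircuitSub p.toSubgraph :=
  ⟨p.toSubgraph_connected.coe, fun _ hv =>
    hp.ncard_neighborSet_toSubgraph_eq_two (p.mem_verts_toSubgraph.mp hv)⟩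

/-- Both being 2-regular, `C` and `D` have the same neighbourhoods at the vertices of `C`, so
`C.verts` is closed under `D`-adjacency and fills the connected `D`. -/
lemma IsCircuitSub.eq_of_edgeSet_subset {C D : G.Subgraph} (hC : IsCircuitSub C)
    (hD : IsCircuitSub D) (hCD : C.edgeSet ⊆ D.edgeSet) : C = D := by
  have hadj : ∀ {x y}, C.Adj x y → D.Adj x y := fun h =>
    Subgraph.mem_edgeSet.mp (hCD (Subgraph.mem_edgeSet.mpr h))
  have hCv : ∀ v ∈ C.verts, v ∈ D.verts := fun v hv => by
    obtain ⟨w, hw⟩ := Set.nonempty_of_ncard_ne_zero (s := C.neighborSet v)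
      (by rw [hC.2 v hv]; decide)
    exact (hadj hw).fst_mem
  have hnbr : ∀ v ∈ C.verts, C.neighborSet v = D.neighborSet v := fun v hv =>
    Set.eq_of_subset_of_ncard_le (fun _ => hadj) (by rw [hC.2 v hv, hD.2 v (hCv v hv)])
      (Set.finite_of_ncard_ne_zero (by rw [hD.2 v (hCv v hv)]; decide))
  have hverts : C.verts = D.verts := by
    refine (Set.Subset.antisymm hCv) fun y hy => ?_
    obtain ⟨⟨x, hx⟩⟩ := hC.1.nonempty
    have hxy :=
      (reachable_iff_reflTransGen _ _).mp (hD.1.preconnected ⟨x, hCv x hx⟩ ⟨y, hy⟩)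
    change (⟨y, hy⟩ : D.verts).1 ∈ C.verts
    generalize (⟨y, hy⟩ : D.verts) = z at hxy
    induction hxy with
    | refl => exact hx
    | @tail a b _ hab ha =>
      have hb : b.1 ∈ C.neighborSet a.1 := by rw [hnbr _ ha]; exact hab
      exact hb.snd_mem
  refine Subgraph.ext hverts (funext₂ fun x y => propext ⟨hadj, fun h => ?_⟩)
  change y ∈ C.neighborSet x
  rw [hnbr x (hverts ▸ h.fst_mem)]
  exact h

lemma SimpleGraph.Walk.IsCycle.exists_isMatching_verts_eq {u : V} {p : G.Walk u u}
    (hp : p.IsCycle) (heven : Even p.length) :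
    ∃ M : G.Subgraph, M.IsMatching ∧ M ≤ p.toSubgraph ∧ M.verts = p.toSubgraph.verts := by
  obtain ⟨m, hm⟩ := heven
  have hlt (i : Fin m) : 2 * (i : ℕ) < p.length := by omega
  have hinj {a b : ℕ} (ha : a < p.length) (hb : b < p.length) (h : p.getVert a = p.getVert b) :
      a = b :=
    hp.getVert_injOn' (by rw [Set.mem_ofPred_eq]; omega) (by rw [Set.mem_ofPred_eq]; omega) h
  refine ⟨⨆ i : Fin m, G.subgraphOfAdj (p.adj_getVert_succ (hlt i)),
    Subgraph.IsMatching.iSup (fun _ => .subgraphOfAdj _) fun i j hij => ?_,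
    iSup_le fun i => subgraphOfAdj_le_of_adj _ (p.toSubgraph_adj_getVert (hlt i)), ?_⟩
  · dsimp only
    rw [(Subgraph.IsMatching.subgraphOfAdj _).support_eq_verts,
      (Subgraph.IsMatching.subgraphOfAdj _).support_eq_verts, Set.disjoint_left]
    simp only [subgraphOfAdj_verts, Set.mem_insert_iff, Set.mem_singleton_iff]
    have hi := hlt i
    have hj := hlt j
    have hij' : (i : ℕ) ≠ j := Fin.val_ne_of_ne hij
    rintro v (rfl | rfl) (h | h) <;> have := hinj (by omega) (by omega) h <;> omega
  · ext v
    simp only [Subgraph.verts_iSup, subgraphOfAdj_verts, Set.mem_iUnion, Set.mem_insert_iff,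
      Set.mem_singleton_iff, mem_verts_toSubgraph, mem_support_iff_exists_getVert]
    constructor
    · rintro ⟨i, rfl | rfl⟩
      · exact ⟨2 * i, rfl, (hlt i).le⟩
      · exact ⟨2 * i + 1, rfl, hlt i⟩
    · rintro ⟨k, rfl, hk⟩
      obtain ⟨k', hk', hkk'⟩ : ∃ k' < p.length, p.getVert k' = p.getVert k := by
        rcases hk.lt_or_eq with hk | rfl
        · exact ⟨k, hk, rfl⟩
        · exact ⟨0, by have := hp.three_le_length; omega, by simp⟩
      refine ⟨⟨k' / 2, by omega⟩, ?_⟩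
      rw [← hkk', Fin.val_mk]
      rcases Nat.even_or_odd' k' with ⟨j, rfl | rfl⟩
      · left; congr 1; omega
      · right; congr 1; omega

lemma SimpleGraph.Walk.IsHamiltonianCycle.exists_isPerfectMatching_le {u : V}
    {p : G.Walk u u} (hp : p.IsHamiltonianCycle) (heven : Even p.length) :
    ∃ M : G.Subgraph, M.IsPerfectMatching ∧ M ≤ p.toSubgraph := by
  obtain ⟨M, hM, hle, hverts⟩ := hp.isCycle.exists_isMatching_verts_eq heven
  exact ⟨M, ⟨hM, fun v => hverts ▸ p.mem_verts_toSubgraph.mpr (hp.mem_support v)⟩, hle⟩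

lemma IsDisjointCircuitCollection.eq_of_verts_eq_univ {𝒞 : Set G.Subgraph}
    (h𝒞 : IsDisjointCircuitCollection G 𝒞) {C D : G.Subgraph} (hC : C ∈ 𝒞)
    (hCv : C.verts = Set.univ) (hD : D ∈ 𝒞) : D = C := by
  by_contra hne
  obtain ⟨⟨v, hv⟩⟩ := (h𝒞.1 D hD).1.nonempty
  exact Set.disjoint_left.mp (h𝒞.2 hD hC hne) hv (hCv ▸ Set.mem_univ v)

end

theorem hamiltonian_cubic_pm_hitting_circuits {V : Type} [Fintype V] (G : SimpleGraph V)
    (hham : G.IsHamiltonian) (hcubic : IsCubic G)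
    (𝒞 : Set G.Subgraph) (h𝒞 : IsDisjointCircuitCollection G 𝒞) :
    ∃ M : Set (Sym2 V), IsPerfectMatchingSet G M ∧ ∀ C ∈ 𝒞, ∃ f ∈ M, f ∈ C.edgeSet := by
  have hcard : Fintype.card V ≠ 1 := fun h1 => by
    have : Nonempty V := Fintype.card_pos_iff.mp (by omega)
    have := Fintype.one_lt_card_iff_nontrivial.mpr hcubic.nontrivial
    omega
  obtain ⟨a, p, hp⟩ := hham hcard
  have hspan : ∀ v, v ∈ p.toSubgraph.verts :=
    fun v => p.mem_verts_toSubgraph.mpr (hp.mem_support v)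
  have hH := hp.isCycle.isCircuitSub_toSubgraph
  by_cases hsub : ∃ C ∈ 𝒞, C.edgeSet ⊆ p.toSubgraph.edgeSet
  · obtain ⟨C, hC, hCH⟩ := hsub
    obtain rfl := (h𝒞.1 C hC).eq_of_edgeSet_subset hH hCH
    obtain ⟨M, hM, hMC⟩ := hp.exists_isPerfectMatching_le (hp.length_eq ▸ hcubic.even_card)
    obtain ⟨b, hab, -⟩ := hM.1 (hM.2 a)
    refine ⟨M.edgeSet, hM.isPerfectMatchingSet, fun D hD => ?_⟩
    rw [h𝒞.eq_of_verts_eq_univ hC (Set.eq_univ_of_forall hspan) hD]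
    exact ⟨s(a, b), hab, hMC.2 hab⟩
  · refine ⟨G.edgeSet \ p.toSubgraph.edgeSet,
      hcubic.isPerfectMatchingSet_edgeSet_diff fun v => hH.2 v (hspan v), fun C hC => ?_⟩
    obtain ⟨f, hfC, hfH⟩ := Set.not_subset.mp fun h => hsub ⟨C, hC, h⟩
    exact ⟨f, ⟨C.edgeSet_subset hfC, hfH⟩, hfC⟩
end

section
/- Every Klee-graph G admits two perfect matchings M1 and M2 such that the graph obtained from G by deleting all edges of M1 ∪ M2 contains no cycle. -/
open SimpleGraph
open scoped Classical

/-!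
Klee-graphs are 3-edge-colourable, i.e. their edges split into three perfect matchings: `K₄` is,
and a colouring survives expanding a vertex `v` into a triangle, since the three edges at `v` carry
distinct colours; each triangle vertex keeps the colour of its outer edge, and each triangle edge
gets the colour of the outer edge at the opposite vertex. Deleting two of the matchings leaves the
third, which contains no cycle.
-/

namespace SimpleGraph

variable {V W : Type}

theorem isAcyclic_of_forall_adj_eq {G : SimpleGraph V} (f : V → V)
    (h : ∀ a b, G.Adj a b → b = f a) : G.IsAcyclic := fun _ p hp =>
  hp.snd_ne_penultimate <|
    (h _ _ (p.adj_snd hp.not_nil)).trans (h _ _ (p.adj_penultimate hp.not_nil).symm).symm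

/-- Three perfect matchings covering all edges of `G`, each encoded by its partner map
(a fixed-point-free involution along edges). -/
structure IsPerfectMatchingCover (G : SimpleGraph V) (m : Fin 3 → V → V) : Prop where
  adj : ∀ j v, G.Adj v (m j v)
  involutive : ∀ j, Function.Involutive (m j)
  exists_eq_of_adj : ∀ ⦃v w⦄, G.Adj v w → ∃ j, m j v = w

def partnerEdges (f : V → V) : Set (Sym2 V) :=
  Set.range fun v => s(v, f v)

theorem isPerfectMatchingSet_partnerEdges {G : SimpleGraph V} {f : V → V}
    (hadj : ∀ v, G.Adj v (f v)) (hf : Function.Involutive f) :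
    IsPerfectMatchingSet G (partnerEdges f) := by
  refine ⟨Set.range_subset_iff.2 hadj, fun v => ⟨s(v, f v), ⟨⟨v, rfl⟩, Sym2.mem_mk_left _ _⟩, ?_⟩⟩
  rintro _ ⟨⟨u, rfl⟩, hv⟩
  rcases Sym2.mem_iff.1 hv with rfl | rfl
  · rfl
  · rw [hf u, Sym2.eq_swap]

namespace IsPerfectMatchingCover

variable {G : SimpleGraph V} {H : SimpleGraph W} {m : Fin 3 → V → V}

theorem isPerfectMatchingSet (hm : G.IsPerfectMatchingCover m) (j : Fin 3) :
    IsPerfectMatchingSet G (partnerEdges (m j)) :=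
  isPerfectMatchingSet_partnerEdges (hm.adj j) (hm.involutive j)

theorem isAcyclic_deleteEdges (hm : G.IsPerfectMatchingCover m) :
    (G.deleteEdges (partnerEdges (m 0) ∪ partnerEdges (m 1))).IsAcyclic := by
  refine isAcyclic_of_forall_adj_eq (m 2) fun a b hab => ?_
  rw [deleteEdges_adj] at hab
  obtain ⟨j, rfl⟩ := hm.exists_eq_of_adj hab.1
  fin_cases j
  · exact absurd (Or.inl ⟨a, rfl⟩) hab.2
  · exact absurd (Or.inr ⟨a, rfl⟩) hab.2
  · rfl

theorem map (hm : G.IsPerfectMatchingCover m) (φ : G ≃g H) :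
    H.IsPerfectMatchingCover fun j w => φ (m j (φ.symm w)) where
  adj j w := by simpa using φ.map_adj_iff.2 (hm.adj j (φ.symm w))
  involutive j w := by simp [hm.involutive j _]
  exists_eq_of_adj v w h := by
    obtain ⟨j, hj⟩ := hm.exists_eq_of_adj (φ.symm.map_adj_iff.2 h)
    exact ⟨j, by simp [hj]⟩

end IsPerfectMatchingCover

theorem isPerfectMatchingCover_top_fin_four :
    (⊤ : SimpleGraph (Fin 4)).IsPerfectMatchingCover fun j x => x ^^^ j.succ := by
  refine ⟨by decide, fun j x => ?_, by decide⟩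
  revert j x
  decide

theorem fin_three_neg_sub_ne_left {i k : Fin 3} (h : k ≠ i) : -i - k ≠ i := by
  revert i k; decide

theorem fin_three_neg_sub_ne_right {i k : Fin 3} (h : k ≠ i) : -i - k ≠ k := by
  revert i k; decide

def expandVertex (G : SimpleGraph V) (v : V) (σ : Fin 3 → {u : V // u ≠ v}) :
    SimpleGraph (Fin 3 ⊕ {u : V // u ≠ v}) where
  Adj x y := match x, y with
    | .inl i, .inl k => i ≠ k
    | .inl i, .inr a => a = σ i
    | .inr a, .inl i => a = σ i
    | .inr a, .inr b => G.Adj a b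
  symm := ⟨by rintro (i | a) (k | b) h <;> simp_all [ne_comm, G.adj_comm]⟩
  loopless := ⟨by rintro (i | a) h <;> simp_all⟩

/-- Extends a matching `f` of `G` with `f v = σ i`; the triangle edge opposite to `i` joins `k`
and `-i - k`, as `0 + 1 + 2 = 0` in `Fin 3`. -/
noncomputable def expandPartner (f : V → V) (v : V) (σ : Fin 3 → {u : V // u ≠ v}) (i : Fin 3) :
    Fin 3 ⊕ {u : V // u ≠ v} → Fin 3 ⊕ {u : V // u ≠ v}
  | .inl k => if k = i then .inr (σ i) else .inl (-i - k)
  | .inr a => if h : f a = v then .inl i else .inr ⟨f a, h⟩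

section expandPartner

variable {G : SimpleGraph V} {f : V → V} {v : V} {σ : Fin 3 → {u : V // u ≠ v}} {i : Fin 3}

theorem expandPartner_involutive (hf : Function.Involutive f) (hfv : (σ i).1 = f v) :
    Function.Involutive (expandPartner f v σ i) := by
  rintro (k | a)
  · by_cases hk : k = i
    · simp [expandPartner, hk, hfv, hf v]
    · simp [expandPartner, hk, fin_three_neg_sub_ne_left hk]
  · by_cases ha : f a = v
    · have : σ i = a := Subtype.ext (by simpa [hfv, ha] using hf a.1)
      simp [expandPartner, ha, this]
    · simp [expandPartner, ha, hf a, a.2]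

theorem expandVertex_adj_expandPartner (hadj : ∀ x, G.Adj x (f x))
    (hf : Function.Involutive f) (hfv : (σ i).1 = f v) (x : Fin 3 ⊕ {u : V // u ≠ v}) :
    (G.expandVertex v σ).Adj x (expandPartner f v σ i x) := by
  rcases x with k | a
  · by_cases hk : k = i
    · simp [expandPartner, expandVertex, hk]
    · simp [expandPartner, expandVertex, hk, (fin_three_neg_sub_ne_right hk).symm]
  · by_cases ha : f a = v
    · have : a = σ i := Subtype.ext (by simpa [hfv, ha] using (hf a.1).symm)
      simpa [expandPartner, expandVertex, ha] using this
    · simp [expandPartner, expandVertex, ha, hadj a.1]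

end expandPartner

theorem IsPerfectMatchingCover.expandVertex {G : SimpleGraph V} {m : Fin 3 → V → V}
    (hm : G.IsPerfectMatchingCover m) {v : V} {σ : Fin 3 → {u : V // u ≠ v}}
    (hσ : Function.Injective σ) (hnbr : ∀ u : {u : V // u ≠ v}, G.Adj v u ↔ u ∈ Set.range σ) :
    ∃ m', (G.expandVertex v σ).IsPerfectMatchingCover m' := by
  choose ι hι using fun j => (hnbr ⟨m j v, (hm.adj j v).ne'⟩).1 (hm.adj j v)
  have hιv : ∀ j, (σ (ι j)).1 = m j v := fun j => congrArg Subtype.val (hι j)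
  have hι_surj : ∀ i, ∃ j, ι j = i := fun i => by
    obtain ⟨j, hj⟩ := hm.exists_eq_of_adj ((hnbr (σ i)).2 ⟨i, rfl⟩)
    exact ⟨j, hσ (Subtype.ext ((hιv j).trans hj))⟩
  refine ⟨fun j => expandPartner (m j) v σ (ι j), fun j => expandVertex_adj_expandPartner
    (hm.adj j) (hm.involutive j) (hιv j), fun j => expandPartner_involutive (hm.involutive j)
    (hιv j), ?_⟩
  rintro (i | a) (k | b) h
  · obtain ⟨j, hj⟩ := hι_surj (-i - k)
    refine ⟨j, ?_⟩
    simp [expandPartner, hj, (fin_three_neg_sub_ne_left (Ne.symm h)).symm]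
  · obtain rfl : b = σ i := h
    obtain ⟨j, rfl⟩ := hι_surj i
    exact ⟨j, by simp [expandPartner]⟩
  · obtain rfl : a = σ k := h
    obtain ⟨j, rfl⟩ := hι_surj k
    have : m j (σ (ι j)) = v := by simpa [hιv] using hm.involutive j v
    exact ⟨j, by simp [expandPartner, this]⟩
  · obtain ⟨j, hj⟩ := hm.exists_eq_of_adj h
    exact ⟨j, by simp [expandPartner, hj, b.2]⟩

end SimpleGraph

theorem IsTriangleExpansion.exists_iso {V W : Type} {G : SimpleGraph V} {H : SimpleGraph W}
    (h : IsTriangleExpansion G H) :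
    ∃ (v : V) (σ : Fin 3 → {u : V // u ≠ v}), Function.Injective σ ∧
      (∀ u : {u : V // u ≠ v}, G.Adj v u ↔ u ∈ Set.range σ) ∧
      Nonempty (G.expandVertex v σ ≃g H) := by
  obtain ⟨v, t, g, σ, ht, hg, hdisj, huniv, hσ, hσadj, hσr, hAtt, hAgg, hAtg⟩ := h
  have htg : ∀ i a, t i ≠ g a := fun i a h =>
    (Set.eq_empty_iff_forall_notMem.1 hdisj) (t i) ⟨⟨i, rfl⟩, a, h.symm⟩
  have hbij : Function.Bijective (Sum.elim t g) :=
    ⟨ht.sumElim hg htg, by rw [← Set.range_eq_univ, Set.Sum.elim_range, huniv]⟩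
  refine ⟨v, σ, hσ, fun u => ⟨hσr u, ?_⟩, ⟨{ toEquiv := .ofBijective _ hbij, map_rel_iff' := ?_ }⟩⟩
  · rintro ⟨i, rfl⟩
    exact hσadj i
  · rintro (i | a) (k | b) <;> simp [expandVertex, hAtt, hAgg, hAtg, H.adj_comm]

theorem IsKlee.exists_isPerfectMatchingCover {V : Type} {G : SimpleGraph V} (hG : IsKlee G) :
    ∃ m, G.IsPerfectMatchingCover m := by
  induction hG with
  | base G e h =>
    let φ : G ≃g (⊤ : SimpleGraph (Fin 4)) := { toEquiv := e, map_rel_iff' := by simp [h] }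
    exact ⟨_, isPerfectMatchingCover_top_fin_four.map φ.symm⟩
  | expand G H _ hex ih =>
    obtain ⟨v, σ, hσ, hnbr, ⟨φ⟩⟩ := hex.exists_iso
    obtain ⟨m, hm⟩ := ih
    obtain ⟨m', hm'⟩ := hm.expandVertex hσ hnbr
    exact ⟨_, hm'.map φ⟩

theorem klee_two_pm_acyclic {V : Type} (G : SimpleGraph V) (hG : IsKlee G) :
    ∃ M1 M2 : Set (Sym2 V), IsPerfectMatchingSet G M1 ∧ IsPerfectMatchingSet G M2 ∧
      (G.deleteEdges (M1 ∪ M2)).IsAcyclic := by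
  obtain ⟨m, hm⟩ := hG.exists_isPerfectMatchingCover
  exact ⟨_, _, hm.isPerfectMatchingSet 0, hm.isPerfectMatchingSet 1, hm.isAcyclic_deleteEdges⟩
end
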